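/- arXiv:1705.05918 — 2 statements merged into one kernel-verified Lean document; each statement's English description precedes it below -/
import Mathlib

section
/- For every subset T ⊆ {1,…,m}, every permutation τ of {1,…,n}, and every (x, y, z) in H_C, the inequality (√(σ + ∑_{i∈T} d_i y_i²) + ∑_{k=1}^n π^{σ+d(T)}_{τ,k} · x_{τ(k)})² + ∑_{i∈{1,…,m}∖T} d_i y_i² ≤ z² holds, where d(T) = ∑_{i∈T} d_i. -/
/-!
The coefficients `π_k` are the increments of the concave function `√` along the prefix sums
`γ + c_{τ(1)} + ⋯ + c_{τ(k)}`. With `A = σ + ∑_{i ∈ T} d_i y_i² ≤ γ = σ + d(T)` and `0 ≤ x ≤ 1`,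
the running sum `A + ∑_{j < k} c_{τ(j)} x_{τ(j)}` stays below the prefix sum `γ + ∑_{j < k} c_{τ(j)}`,
so concavity bounds `π_k x_{τ(k)}` by the increment of `√` along the running sum. These increments
telescope to `√(A + ∑ c_i x_i)`; squaring and adding the terms outside `T` gives the bound by `z²`.
-/

open Finset

lemma Real.sqrt_add_sub_sqrt_le_of_le {u v e : ℝ} (hu : 0 ≤ u) (huv : u ≤ v) (he : 0 ≤ e) :
    √(v + e) - √v ≤ √(u + e) - √u := by
  have hv : 0 ≤ v := hu.trans huv
  have hcross : √(v + e) * √u ≤ √(u + e) * √v := by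
    rw [← Real.sqrt_mul (by linarith), ← Real.sqrt_mul (by linarith)]
    exact Real.sqrt_le_sqrt (by nlinarith)
  have hsq : (√(v + e) + √u) ^ 2 ≤ (√(u + e) + √v) ^ 2 := by
    nlinarith [Real.sq_sqrt (add_nonneg hv he), Real.sq_sqrt (add_nonneg hu he),
      Real.sq_sqrt hu, Real.sq_sqrt hv]
  have := (pow_le_pow_iff_left₀ (by positivity) (by positivity) two_ne_zero).1 hsq
  linarith

lemma Real.mul_sqrt_add_sub_sqrt_le {B a t : ℝ} (hB : 0 ≤ B) (ha : 0 ≤ a) (ht₀ : 0 ≤ t)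
    (ht₁ : t ≤ 1) : t * (√(B + a) - √B) ≤ √(B + t * a) - √B := by
  have := Real.strictConcaveOn_sqrt.concaveOn.2 (Set.mem_Ici.2 (add_nonneg hB ha))
    (Set.mem_Ici.2 hB) ht₀ (sub_nonneg.2 ht₁) (by ring)
  simp only [smul_eq_mul] at this
  rw [show t * (B + a) + (1 - t) * B = B + t * a by ring] at this
  linarith

/-- The paper's `π^γ_{τ,k}` is `polymatroidCoeff (c ∘ τ) γ k`, with 0-based `k`. -/
noncomputable def polymatroidCoeff {n : ℕ} (a : Fin n → ℝ) (γ : ℝ) (k : Fin n) : ℝ :=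
  √(γ + ∑ j ∈ Iic k, a j) - √(γ + ∑ j ∈ Iio k, a j)

lemma polymatroidCoeff_nonneg {n : ℕ} {a : Fin n → ℝ} (ha : ∀ i, 0 ≤ a i) (γ : ℝ) (k : Fin n) :
    0 ≤ polymatroidCoeff a γ k :=
  sub_nonneg.2 <| Real.sqrt_le_sqrt <| add_le_add le_rfl <|
    sum_le_sum_of_subset_of_nonneg Iio_subset_Iic_self fun i _ _ => ha i

lemma polymatroidCoeff_castSucc {n : ℕ} (a : Fin (n + 1) → ℝ) (γ : ℝ) (k : Fin n) :
    polymatroidCoeff a γ k.castSucc = polymatroidCoeff (fun j => a j.castSucc) γ k := by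
  simp only [polymatroidCoeff, ← Fin.map_castSuccEmb_Iic, ← Fin.map_castSuccEmb_Iio, sum_map,
    Fin.coe_castSuccEmb]

lemma polymatroidCoeff_last {n : ℕ} (a : Fin (n + 1) → ℝ) (γ : ℝ) :
    polymatroidCoeff a γ (Fin.last n) =
      √(γ + ∑ j : Fin n, a j.castSucc + a (Fin.last n)) - √(γ + ∑ j : Fin n, a j.castSucc) := by
  rw [polymatroidCoeff, ← Fin.top_eq_last, Iic_top, Fin.top_eq_last, Fin.Iio_last_eq_map, sum_map,
    Fin.sum_univ_castSucc, add_assoc]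
  simp only [Fin.coe_castSuccEmb]

theorem sqrt_add_sum_polymatroidCoeff_mul_le {n : ℕ} (a t : Fin n → ℝ) {A γ : ℝ} (hA : 0 ≤ A)
    (hAγ : A ≤ γ) (ha : ∀ i, 0 ≤ a i) (ht₀ : ∀ i, 0 ≤ t i) (ht₁ : ∀ i, t i ≤ 1) :
    √A + ∑ k, polymatroidCoeff a γ k * t k ≤ √(A + ∑ k, a k * t k) := by
  induction n with
  | zero => simp
  | succ n ih =>
    rw [Fin.sum_univ_castSucc, Fin.sum_univ_castSucc, polymatroidCoeff_last, ← add_assoc A]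
    simp only [polymatroidCoeff_castSucc]
    set B := A + ∑ k : Fin n, a k.castSucc * t k.castSucc
    set G := γ + ∑ k : Fin n, a k.castSucc
    have hB : 0 ≤ B := add_nonneg hA <| sum_nonneg fun i _ => mul_nonneg (ha _) (ht₀ _)
    have hBG : B ≤ G := add_le_add hAγ <| sum_le_sum fun i _ =>
      mul_le_of_le_one_right (ha _) (ht₁ _)
    have hprefix := ih (fun j => a j.castSucc) (fun j => t j.castSucc) (fun _ => ha _)
      (fun _ => ht₀ _) (fun _ => ht₁ _)
    have hlast := mul_le_mul_of_nonneg_right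
      (Real.sqrt_add_sub_sqrt_le_of_le hB hBG (ha (Fin.last n))) (ht₀ (Fin.last n))
    have hconcave := Real.mul_sqrt_add_sub_sqrt_le hB (ha (Fin.last n)) (ht₀ (Fin.last n))
      (ht₁ (Fin.last n))
    rw [mul_comm (a _)]
    linarith

theorem nonlinear_polymatroid_inequality_HC_general
    (n m : ℕ) (σ : ℝ) (hσ : 0 ≤ σ) (c : Fin n → ℝ) (hc : ∀ i, 0 < c i)
    (d : Fin m → ℝ) (hd : ∀ i, 0 < d i) (T : Finset (Fin m)) (τ : Equiv.Perm (Fin n))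
    (x : Fin n → ℝ) (y : Fin m → ℝ) (z : ℝ)
    (hx : ∀ i, x i = 0 ∨ x i = 1) (hy : ∀ i, 0 ≤ y i ∧ y i ≤ 1)
    (hcon : Real.sqrt (σ + ∑ i, c i * x i + ∑ i, d i * y i ^ 2) ≤ z) :
    (Real.sqrt (σ + ∑ i ∈ T, d i * y i ^ 2) +
        ∑ k, (Real.sqrt ((σ + ∑ i ∈ T, d i) + ∑ j ∈ Finset.Iic k, c (τ j)) -
              Real.sqrt ((σ + ∑ i ∈ T, d i) + ∑ j ∈ Finset.Iio k, c (τ j))) * x (τ k)) ^ 2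
      + ∑ i ∈ Tᶜ, d i * y i ^ 2 ≤ z ^ 2 := by
  set A := σ + ∑ i ∈ T, d i * y i ^ 2
  have hx₀₁ : ∀ i, 0 ≤ x i ∧ x i ≤ 1 := fun i => by rcases hx i with h | h <;> simp [h]
  have hA : 0 ≤ A := add_nonneg hσ <| sum_nonneg fun i _ => by have := hd i; positivity
  have hAγ : A ≤ σ + ∑ i ∈ T, d i := add_le_add le_rfl <| sum_le_sum fun i _ =>
    mul_le_of_le_one_right (hd i).le (pow_le_one₀ (hy i).1 (hy i).2)
  have hpoly := sqrt_add_sum_polymatroidCoeff_mul_le (fun k => c (τ k)) (fun k => x (τ k)) hA hAγ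
    (fun _ => (hc _).le) (fun _ => (hx₀₁ _).1) (fun _ => (hx₀₁ _).2)
  rw [Equiv.sum_comp τ (fun i => c i * x i)] at hpoly
  have hsq := (Real.le_sqrt
    (add_nonneg (Real.sqrt_nonneg A) <| sum_nonneg fun k _ =>
      mul_nonneg (polymatroidCoeff_nonneg (fun _ => (hc _).le) _ k) (hx₀₁ _).1)
    (add_nonneg hA <| sum_nonneg fun i _ => mul_nonneg (hc i).le (hx₀₁ i).1)).1 hpoly
  have hz := (Real.sqrt_le_iff.1 hcon).2
  rw [← sum_add_sum_compl T] at hz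
  change (√A + ∑ k, polymatroidCoeff (fun k => c (τ k)) _ k * x (τ k)) ^ 2 + _ ≤ _
  linarith

/-- For every T ⊆ {1,…,m}, every permutation τ, and every (x, y, z) ∈ H_C:
(√(σ + ∑_{i∈T} dᵢ yᵢ²) + ∑ₖ π^{σ+d(T)}_{τ,k} x_{τ(k)})² + ∑_{i∉T} dᵢ yᵢ² ≤ z². -/
theorem nonlinear_polymatroid_inequality_HC
    (n m : ℕ) (σ : ℝ) (hσ : 0 ≤ σ) (c : Fin n → ℝ) (hc : ∀ i, 0 < c i)
    (d : Fin m → ℝ) (hd : ∀ i, 0 < d i) (T : Finset (Fin m)) (τ : Equiv.Perm (Fin n))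
    (x : Fin n → ℝ) (y : Fin m → ℝ) (z : ℝ)
    (hx : ∀ i, x i = 0 ∨ x i = 1) (hy : ∀ i, 0 ≤ y i ∧ y i ≤ 1) (hz : 0 ≤ z)
    (hcon : Real.sqrt (σ + ∑ i, c i * x i + ∑ i, d i * y i ^ 2) ≤ z) :
    (Real.sqrt (σ + ∑ i ∈ T, d i * y i ^ 2) +
        ∑ k, (Real.sqrt ((σ + ∑ i ∈ T, d i) + ∑ j ∈ Finset.Iic k, c (τ j)) -
              Real.sqrt ((σ + ∑ i ∈ T, d i) + ∑ j ∈ Finset.Iio k, c (τ j))) * x (τ k)) ^ 2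
      + ∑ i ∈ Tᶜ, d i * y i ^ 2 ≤ z ^ 2 :=
  nonlinear_polymatroid_inequality_HC_general n m σ hσ c hc d hd T τ x y z hx hy hcon
end

section
/- For every permutation τ of {1,…,n} and every (x, y, w, z) in R_D, the rotated-cone polymatroid inequality holds: (√σ + ∑_{k=1}^n π^σ_{τ,k} · x_{τ(k)})² + ∑_{i=1}^m d_i y_i² ≤ 4wz. -/
private lemma finIicSum (n : ℕ) (f : Fin n → ℝ) (k : Fin n) :
    ∑ j ∈ Finset.Iic k, f j
      = ∑ j ∈ Finset.range (k.val+1), (if h : j < n then f ⟨j,h⟩ else 0) := by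
  refine Finset.sum_nbij' (fun j => (j : ℕ)) (fun a => if h : a < n then ⟨a, h⟩ else k) ?_ ?_ ?_ ?_ ?_
  · intro a ha
    have h : a ≤ k := by simpa using ha
    exact Finset.mem_range.mpr (Nat.lt_succ_of_le h)
  · intro a ha
    have ha' : a ≤ (k : ℕ) := Nat.lt_succ_iff.mp (Finset.mem_range.mp ha)
    have h : a < n := ha'.trans_lt k.isLt
    simp only [dif_pos h]
    simpa using Fin.le_def.mpr ha'
  · intro a ha; simp [a.isLt]
  · intro a ha
    have h : a < n := (Nat.lt_succ_iff.mp (Finset.mem_range.mp ha)).trans_lt k.isLt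
    simp [h]
  · intro a ha; simp [a.isLt]

private lemma finIioSum (n : ℕ) (f : Fin n → ℝ) (k : Fin n) :
    ∑ j ∈ Finset.Iio k, f j
      = ∑ j ∈ Finset.range k.val, (if h : j < n then f ⟨j,h⟩ else 0) := by
  refine Finset.sum_nbij' (fun j => (j : ℕ)) (fun a => if h : a < n then ⟨a, h⟩ else k) ?_ ?_ ?_ ?_ ?_
  · intro a ha
    have h : a < k := by simpa using ha
    exact Finset.mem_range.mpr h
  · intro a ha
    have ha' : a < (k : ℕ) := Finset.mem_range.mp ha
    have h : a < n := ha'.trans k.isLt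
    simp only [dif_pos h]
    simpa using Fin.lt_def.mpr ha'
  · intro a ha; simp [a.isLt]
  · intro a ha
    have h : a < n := (Finset.mem_range.mp ha).trans k.isLt
    simp [h]
  · intro a ha; simp [a.isLt]

private lemma sqrt_diff_anti (a b u : ℝ) (ha : 0 ≤ a) (hab : a ≤ b) (hu : 0 ≤ u) :
    Real.sqrt (b + u) - Real.sqrt b ≤ Real.sqrt (a + u) - Real.sqrt a := by
  have hb : (0:ℝ) ≤ b := ha.trans hab
  have key : Real.sqrt (b + u) + Real.sqrt a ≤ Real.sqrt (a + u) + Real.sqrt b := by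
    have h1 : a * (b + u) ≤ b * (a + u) := by nlinarith
    have h2 : Real.sqrt (a * (b + u)) ≤ Real.sqrt (b * (a + u)) := Real.sqrt_le_sqrt h1
    rw [Real.sqrt_mul ha, Real.sqrt_mul hb] at h2
    have e1 : (Real.sqrt (b + u) + Real.sqrt a) ^ 2
        = (b + u) + a + 2 * (Real.sqrt a * Real.sqrt (b + u)) := by
      have := Real.sq_sqrt (by linarith : (0:ℝ) ≤ b + u)
      have := Real.sq_sqrt ha
      ring_nf
      nlinarith [Real.sq_sqrt (by linarith : (0:ℝ) ≤ b + u), Real.sq_sqrt ha]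
    have e2 : (Real.sqrt (a + u) + Real.sqrt b) ^ 2
        = (a + u) + b + 2 * (Real.sqrt b * Real.sqrt (a + u)) := by
      nlinarith [Real.sq_sqrt (by linarith : (0:ℝ) ≤ a + u), Real.sq_sqrt hb]
    have hsq : (Real.sqrt (b + u) + Real.sqrt a) ^ 2 ≤ (Real.sqrt (a + u) + Real.sqrt b) ^ 2 := by
      rw [e1, e2]; linarith
    have h0l : 0 ≤ Real.sqrt (b + u) + Real.sqrt a :=
      add_nonneg (Real.sqrt_nonneg _) (Real.sqrt_nonneg _)
    have h0r : 0 ≤ Real.sqrt (a + u) + Real.sqrt b :=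
      add_nonneg (Real.sqrt_nonneg _) (Real.sqrt_nonneg _)
    nlinarith
  linarith

private lemma polymatroid_key (σ : ℝ) (hσ : 0 ≤ σ) (c ξ : ℕ → ℝ) (hc : ∀ j, 0 ≤ c j)
    (hξ : ∀ j, ξ j = 0 ∨ ξ j = 1) : ∀ N,
    Real.sqrt σ + ∑ k ∈ Finset.range N,
        (Real.sqrt (σ + ∑ j ∈ Finset.range (k+1), c j)
          - Real.sqrt (σ + ∑ j ∈ Finset.range k, c j)) * ξ k
      ≤ Real.sqrt (σ + ∑ k ∈ Finset.range N, c k * ξ k) := by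
  intro N
  induction N with
  | zero => simp
  | succ N ih =>
    rw [Finset.sum_range_succ, Finset.sum_range_succ (f := fun k => c k * ξ k)]
    set P := ∑ j ∈ Finset.range N, c j with hP
    set Q := ∑ j ∈ Finset.range N, c j * ξ j with hQ
    have hQnn : 0 ≤ Q := Finset.sum_nonneg fun j _ => by
      rcases hξ j with h | h <;> simp [h, hc j]
    have hQP : Q ≤ P := Finset.sum_le_sum fun j _ => by
      rcases hξ j with h | h <;> simp [h, hc j]
    rcases hξ N with h | h
    · simpa [h] using ih
    · rw [h, mul_one, mul_one, Finset.sum_range_succ (f := c), ← hP]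
      have hmono := sqrt_diff_anti (σ + Q) (σ + P) (c N) (by linarith)
        (by linarith) (hc N)
      have e : σ + Q + c N = σ + (Q + c N) := by ring
      have e' : σ + P + c N = σ + (P + c N) := by ring
      rw [e, e'] at hmono
      linarith

/-- For every permutation τ and every (x, y, w, z) ∈ R_D, the rotated-cone
polymatroid inequality holds: (√σ + ∑ₖ π^σ_{τ,k} x_{τ(k)})² + ∑ dᵢ yᵢ² ≤ 4wz. -/
theorem rotated_polymatroid_inequality_RD
    (n m : ℕ) (σ : ℝ) (hσ : 0 ≤ σ) (c : Fin n → ℝ) (hc : ∀ i, 0 < c i)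
    (d : Fin m → ℝ) (hd : ∀ i, 0 < d i) (τ : Equiv.Perm (Fin n))
    (x : Fin n → ℝ) (y : Fin m → ℝ) (w z : ℝ)
    (hx : ∀ i, x i = 0 ∨ x i = 1) (hy : ∀ i, 0 ≤ y i) (hw : 0 ≤ w) (hz : 0 ≤ z)
    (hcon : σ + ∑ i, c i * x i + ∑ i, d i * y i ^ 2 ≤ 4 * w * z) :
    (Real.sqrt σ +
        ∑ k, (Real.sqrt (σ + ∑ j ∈ Finset.Iic k, c (τ j)) -
              Real.sqrt (σ + ∑ j ∈ Finset.Iio k, c (τ j))) * x (τ k)) ^ 2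
      + ∑ i, d i * y i ^ 2 ≤ 4 * w * z := by
  set c' : ℕ → ℝ := fun j => if h : j < n then c (τ ⟨j, h⟩) else 0 with hc'
  set ξ : ℕ → ℝ := fun j => if h : j < n then x (τ ⟨j, h⟩) else 0 with hξ'
  have hc'nn : ∀ j, 0 ≤ c' j := by
    intro j; simp only [hc']; split
    · exact (hc _).le
    · exact le_refl 0
  have hξ01 : ∀ j, ξ j = 0 ∨ ξ j = 1 := by
    intro j; simp only [hξ']; split
    · exact hx _
    · exact Or.inl rfl
  -- rewrite the LHS sum as a range-sum
  have hsum : ∑ k, (Real.sqrt (σ + ∑ j ∈ Finset.Iic k, c (τ j)) -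
              Real.sqrt (σ + ∑ j ∈ Finset.Iio k, c (τ j))) * x (τ k)
      = ∑ k ∈ Finset.range n,
        (Real.sqrt (σ + ∑ j ∈ Finset.range (k+1), c' j)
          - Real.sqrt (σ + ∑ j ∈ Finset.range k, c' j)) * ξ k := by
    rw [← Fin.sum_univ_eq_sum_range (fun k =>
      (Real.sqrt (σ + ∑ j ∈ Finset.range (k+1), c' j)
          - Real.sqrt (σ + ∑ j ∈ Finset.range k, c' j)) * ξ k) n]
    apply Finset.sum_congr rfl
    intro k _
    rw [finIicSum n (fun j => c (τ j)) k, finIioSum n (fun j => c (τ j)) k]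
    simp [hc', hξ', k.isLt]
  have hcsum : ∑ k ∈ Finset.range n, c' k * ξ k = ∑ i, c i * x i := by
    rw [← Fin.sum_univ_eq_sum_range (fun k => c' k * ξ k) n]
    have : ∀ k : Fin n, c' k * ξ k = c (τ k) * x (τ k) := by
      intro k; simp [hc', hξ', k.isLt]
    rw [Finset.sum_congr rfl (fun k _ => this k)]
    exact Equiv.sum_comp τ (fun i => c i * x i)
  have key := polymatroid_key σ hσ c' ξ hc'nn hξ01 n
  rw [hcsum] at key
  rw [hsum]
  set L := Real.sqrt σ + ∑ k ∈ Finset.range n,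
        (Real.sqrt (σ + ∑ j ∈ Finset.range (k+1), c' j)
          - Real.sqrt (σ + ∑ j ∈ Finset.range k, c' j)) * ξ k
  have hLnn : 0 ≤ L := by
    apply add_nonneg (Real.sqrt_nonneg _)
    apply Finset.sum_nonneg
    intro k _
    apply mul_nonneg
    · have : σ + ∑ j ∈ Finset.range k, c' j ≤ σ + ∑ j ∈ Finset.range (k+1), c' j := by
        rw [Finset.sum_range_succ]; linarith [hc'nn k]
      linarith [Real.sqrt_le_sqrt this]
    · rcases hξ01 k with h | h <;> simp [h]
  have hcx : 0 ≤ ∑ i, c i * x i := Finset.sum_nonneg fun i _ => by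
    rcases hx i with h | h <;> simp [h, (hc i).le]
  have hL2 : L ^ 2 ≤ σ + ∑ i, c i * x i := by
    have := Real.sq_sqrt (by linarith : (0:ℝ) ≤ σ + ∑ i, c i * x i)
    nlinarith [key, hLnn, Real.sqrt_nonneg (σ + ∑ i, c i * x i)]
  linarith
end
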